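/- arXiv:2508.13919 — 2 statements merged into one kernel-verified Lean document; each statement's English description precedes it below -/
import Mathlib

section
/- Let K be a large field of characteristic zero and let δ be a derivation on K. Suppose that for every éz set X ⊆ K^{2r}, if the projection of X onto the first r coordinates has nonempty étale-open interior in K^r, then there is a ∈ K^r with (a, δa) ∈ X. Then for every éz set X ⊆ K^{r+1}, if the projection of X onto the first r coordinates has nonempty étale-open interior in K^r, there is y ∈ K with ∇^r(y) ∈ X. -/
open MvPolynomial FirstOrder FirstOrder.Language

/-- `δ : K → K` is a derivation: additive and satisfying the Leibniz rule. -/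
def IsDerivationOn {K : Type*} [CommRing K] (δ : K → K) : Prop :=
  (∀ a b : K, δ (a + b) = δ a + δ b) ∧ (∀ a b : K, δ (a * b) = a * δ b + b * δ a)

/-- `K` is a large field: every plane curve over `K` with a smooth `K`-rational point
(a simple zero) has infinitely many `K`-rational points. -/
def LargeField (K : Type*) [Field K] : Prop :=
  ∀ P : MvPolynomial (Fin 2) K,
    (∃ x : Fin 2 → K, eval x P = 0 ∧ eval x (pderiv 1 P) ≠ 0) →
    {x : Fin 2 → K | eval x P = 0}.Infinite

/-- `K` is existentially closed in the extension field `L`: every finite system of polynomial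
equations and inequations over `K` with a solution in `L` has a solution in `K`. -/
def ExistentiallyClosedInField (K : Type*) [Field K] (L : Type*) [Field L] [Algebra K L] : Prop :=
  ∀ (n : ℕ) (S T : Finset (MvPolynomial (Fin n) K)),
    (∃ x : Fin n → L, (∀ p ∈ S, aeval x p = 0) ∧ (∀ q ∈ T, aeval x q ≠ 0)) →
    (∃ x : Fin n → K, (∀ p ∈ S, eval x p = 0) ∧ (∀ q ∈ T, eval x q ≠ 0))

/-- `(K, δK)` is existentially closed in the differential field extension `(L, δL)`:
every finite system of differential polynomial equations and inequations over `K`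
(written as polynomials in variables and their first `r` derivatives) with a solution
in `L` has a solution in `K`. -/
def ExistentiallyClosedInDiffField (K : Type*) [Field K] (L : Type*) [Field L] [Algebra K L]
    (δK : K → K) (δL : L → L) : Prop :=
  ∀ (n r : ℕ) (S T : Finset (MvPolynomial (Fin n × Fin (r + 1)) K)),
    (∃ x : Fin n → L, (∀ p ∈ S, aeval (fun ij => δL^[ij.2] (x ij.1)) p = 0) ∧
        (∀ q ∈ T, aeval (fun ij => δL^[ij.2] (x ij.1)) q ≠ 0)) →
    (∃ x : Fin n → K, (∀ p ∈ S, eval (fun ij => δK^[ij.2] (x ij.1)) p = 0) ∧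
        (∀ q ∈ T, eval (fun ij => δK^[ij.2] (x ij.1)) q ≠ 0))

/-- A differential field `(K, δ)` is differentially large if `K` is large and for every
differential field extension `(L, δL)` of `(K, δ)`, if `K` is existentially closed in `L`
as a field then `(K, δ)` is existentially closed in `(L, δL)` as a differential field. -/
def DifferentiallyLarge (K : Type*) [Field K] (δ : K → K) : Prop :=
  LargeField K ∧
    ∀ (L : Type*) [Field L] [Algebra K L] (δL : L → L), IsDerivationOn δL →
      (∀ a : K, δL (algebraMap K L a) = algebraMap K L (δ a)) →
      ExistentiallyClosedInField K L → ExistentiallyClosedInDiffField K L δ δL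

/-- The ideal of polynomials vanishing on a subset `X ⊆ K^σ`. -/
def vanishingIdealOf (K : Type*) [Field K] {σ : Type*} (X : Set (σ → K)) :
    Ideal (MvPolynomial σ K) where
  carrier := {p | ∀ x ∈ X, eval x p = 0}
  add_mem' := by
    intro p q hp hq x hx
    simp [map_add, hp x hx, hq x hx]
  zero_mem' := by intro x hx; simp
  smul_mem' := by
    intro c p hp x hx
    simp [smul_eq_mul, hp x hx]

/-- The algebraic dimension of `X ⊆ K^σ`: the (Krull) dimension of its Zariski closure,
i.e. the Krull dimension of the coordinate ring of its Zariski closure. -/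
noncomputable def algDim (K : Type*) [Field K] {σ : Type*} (X : Set (σ → K)) :
    WithBot ℕ∞ :=
  ringKrullDim (MvPolynomial σ K ⧸ vanishingIdealOf K X)

/-- The Zariski closure of `X ⊆ K^σ`. -/
def zarClosure (K : Type*) [Field K] {σ : Type*} (X : Set (σ → K)) : Set (σ → K) :=
  {x | ∀ p : MvPolynomial σ K, (∀ y ∈ X, eval y p = 0) → eval x p = 0}

/-- A derivation `δ` on the `L`-structure `K` is generic if for every `L(K)`-definable
`X ⊆ K^{1+r}` whose projection onto the first `r` coordinates has algebraic dimension `r`,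
there is `a ∈ K` with `(a, δa, …, δ^r a) ∈ X`. -/
def GenericDerivation (L : Language) (K : Type*) [Field K] [L.Structure K] (δ : K → K) :
    Prop :=
  ∀ (r : ℕ) (X : Set (Fin (r + 1) → K)), (Set.univ : Set K).Definable L X →
    algDim K ((fun x : Fin (r + 1) → K => x ∘ Fin.castSucc) '' X) = (r : WithBot ℕ∞) →
    ∃ a : K, (fun i : Fin (r + 1) => δ^[(i : ℕ)] a) ∈ X

open MvPolynomial FirstOrder FirstOrder.Language

/-- Basic étale-open subsets of `K^σ`: images of the `K`-points of the étale locus of an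
affine variety `W ⊆ K^σ × K^m` cut out by `m` polynomials `Q` under the projection to `K^σ`;
the étale locus is where the Jacobian of `Q` in the last `m` variables is invertible. -/
def etaleBasic (K : Type*) [Field K] (σ : Type*) [Fintype σ] : Set (Set (σ → K)) :=
  {S | ∃ (m : ℕ) (Q : Fin m → MvPolynomial (σ ⊕ Fin m) K),
    S = {x | ∃ y : Fin m → K,
      (∀ i, eval (Sum.elim x y) (Q i) = 0) ∧
      eval (Sum.elim x y)
        (Matrix.det (Matrix.of fun i j : Fin m => pderiv (Sum.inr j) (Q i))) ≠ 0}}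

/-- The étale open topology on `K^σ`, generated by images of étale morphisms into affine
space. -/
def etaleTop (K : Type*) [Field K] (σ : Type*) [Fintype σ] : TopologicalSpace (σ → K) :=
  TopologicalSpace.generateFrom (etaleBasic K σ)

/-- `Z ⊆ K^σ` is Zariski closed: the common zero set of a family of polynomials. -/
def ZarClosed (K : Type*) [Field K] {σ : Type*} (Z : Set (σ → K)) : Prop :=
  ∃ I : Set (MvPolynomial σ K), Z = {x | ∀ p ∈ I, eval x p = 0}

/-- `X ⊆ K^σ` is definable with parameters in the language of rings. -/
def RingDefinable (K : Type*) [Field K] {σ : Type*} (X : Set (σ → K)) : Prop :=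
  letI := FirstOrder.Ring.compatibleRingOfRing K
  (Set.univ : Set K).Definable Language.ring X

/-- `X ⊆ K^σ` is an éz set: it is `ℒ_ring(K)`-definable and a finite union of étale-open
subsets of Zariski closed subsets of `K^σ` (étale-open subsets of a Zariski closed set are
the intersections with étale-open subsets of `K^σ`, since closed immersions induce closed
embeddings for the étale open topologies). -/
def IsEz (K : Type*) [Field K] {σ : Type*} [Fintype σ] (X : Set (σ → K)) : Prop :=
  RingDefinable K X ∧
    ∃ (k : ℕ) (Z U : Fin k → Set (σ → K)),
      (∀ i, ZarClosed K (Z i)) ∧ (∀ i, (etaleTop K σ).IsOpen (U i)) ∧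
      X = ⋃ i, Z i ∩ U i

/-- `S ⊆ K^σ` has nonempty interior in the étale open topology. -/
def HasEtaleInterior (K : Type*) [Field K] {σ : Type*} [Fintype σ] (S : Set (σ → K)) :
    Prop :=
  ∃ U : Set (σ → K), (etaleTop K σ).IsOpen U ∧ U.Nonempty ∧ U ⊆ S

/-- The polynomial obtained from `p` by applying `δ` to each coefficient. -/
noncomputable def coeffDeriv {K : Type*} [Field K] (δ : K → K) {σ : Type*}
    (p : MvPolynomial σ K) : MvPolynomial σ K :=
  ∑ s ∈ p.support, monomial s (δ (coeff s p))

/-- The `K`-points of the affine variety cut out by the ideal `I`. -/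
def affinePoints (K : Type*) [Field K] {n : ℕ} (I : Ideal (MvPolynomial (Fin n) K)) :
    Set (Fin n → K) :=
  {x | ∀ p ∈ I, eval x p = 0}

/-- The `K`-points of the prolongation `τV` of the affine variety `V` cut out by the ideal
`I`: pairs `(x, u)` with `p(x) = 0` and `p^δ(x) + Σ_i (∂p/∂X_i)(x)·u_i = 0` for all `p ∈ I`. -/
def prolongationPoints (K : Type*) [Field K] (δ : K → K) {n : ℕ}
    (I : Ideal (MvPolynomial (Fin n) K)) : Set ((Fin n ⊕ Fin n) → K) :=
  {xu | ∀ p ∈ I,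
    eval (xu ∘ Sum.inl) p = 0 ∧
    eval (xu ∘ Sum.inl) (coeffDeriv δ p) +
      ∑ i : Fin n, eval (xu ∘ Sum.inl) (pderiv i p) * xu (Sum.inr i) = 0}

/-- The affine variety cut out by `I` is a smooth irreducible `K`-variety: `I` is prime
(so the variety is irreducible and reduced) and its coordinate ring is smooth over `K`. -/
def SmoothIrreducibleAffine (K : Type) [Field K] {n : ℕ}
    (I : Ideal (MvPolynomial (Fin n) K)) : Prop :=
  I.IsPrime ∧ Algebra.Smooth K (MvPolynomial (Fin n) K ⧸ I)

lemma etale_preimage_basic (K : Type*) [Field K] {σ τ : Type*} [Fintype σ] [Fintype τ]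
    (v : σ → τ) (hv : Function.Injective v) {S : Set (σ → K)} (hS : S ∈ etaleBasic K σ) :
    ((fun xu : τ → K => xu ∘ v) ⁻¹' S) ∈ etaleBasic K τ := by
  obtain ⟨m, Q, rfl⟩ := hS
  refine ⟨m, fun i => rename (Sum.map v id) (Q i), ?_⟩
  have hinj : Function.Injective (Sum.map v (id : Fin m → Fin m)) :=
    Function.Injective.sumMap hv Function.injective_id
  ext xu
  have key : ∀ (y : Fin m → K) (p : MvPolynomial (σ ⊕ Fin m) K),
      eval (Sum.elim xu y) (rename (Sum.map v id) p) = eval (Sum.elim (xu ∘ v) y) p := by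
    intro y p
    have : Sum.elim xu y ∘ Sum.map v id = Sum.elim (xu ∘ v) y := by
      funext z; cases z <;> rfl
    rw [eval_rename, this]
  have hdet : (Matrix.of fun i j : Fin m => pderiv (Sum.inr j) (rename (Sum.map v id) (Q i))).det
      = rename (Sum.map v id) ((Matrix.of fun i j : Fin m => pderiv (Sum.inr j) (Q i)).det) := by
    rw [show (Matrix.of fun i j : Fin m => pderiv (Sum.inr j) (rename (Sum.map v id) (Q i)))
        = ((rename (Sum.map v id) : MvPolynomial (σ ⊕ Fin m) K →ₐ[K]
            MvPolynomial (τ ⊕ Fin m) K).toRingHom).mapMatrix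
          (Matrix.of fun i j : Fin m => pderiv (Sum.inr j) (Q i)) from ?_, ← RingHom.map_det]
    · rfl
    · exact Matrix.ext fun i j => pderiv_rename hinj (Sum.inr j) (Q i)
  simp only [Set.mem_preimage, Set.mem_setOf_eq]
  constructor
  · rintro ⟨y, h1, h2⟩
    exact ⟨y, fun i => by rw [key]; exact h1 i, by rw [hdet, key]; exact h2⟩
  · rintro ⟨y, h1, h2⟩
    rw [hdet, key] at h2
    exact ⟨y, fun i => by rw [← key]; exact h1 i, h2⟩

lemma etale_preimage_open (K : Type*) [Field K] {σ τ : Type*} [Fintype σ] [Fintype τ]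
    (v : σ → τ) (hv : Function.Injective v) {U : Set (σ → K)}
    (hU : (etaleTop K σ).IsOpen U) :
    (etaleTop K τ).IsOpen ((fun xu : τ → K => xu ∘ v) ⁻¹' U) := by
  have hU' : TopologicalSpace.GenerateOpen (etaleBasic K σ) U := hU
  clear hU
  show TopologicalSpace.GenerateOpen (etaleBasic K τ) _
  induction hU' with
  | basic S hS => exact .basic _ (etale_preimage_basic K v hv hS)
  | univ => rw [Set.preimage_univ]; exact .univ
  | inter a b _ _ iha ihb => rw [Set.preimage_inter]; exact .inter _ _ iha ihb
  | sUnion S _ ih =>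
    rw [Set.preimage_sUnion, ← Set.sUnion_image]
    refine .sUnion _ ?_
    rintro _ ⟨t, ht, rfl⟩
    exact ih t ht

/-- (2) ⇒ (3) in the proposition: if every éz subset of `K^{2r}` whose projection to the
first `r` coordinates has nonempty étale-open interior contains a point `(a, δa)`, then
every éz subset of `K^{r+1}` whose projection to the first `r` coordinates has nonempty
étale-open interior contains a point `(y, δy, …, δ^r y)`. -/
theorem statement1 (K : Type) [Field K] [CharZero K] (hK : LargeField K)
    (δ : K → K) (hδ : IsDerivationOn δ) (r : ℕ)
    (h : ∀ X : Set ((Fin r ⊕ Fin r) → K), IsEz K X →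
      HasEtaleInterior K ((fun xu => xu ∘ Sum.inl) '' X) →
      ∃ a : Fin r → K, Sum.elim a (fun i => δ (a i)) ∈ X) :
    ∀ X : Set (Fin (r + 1) → K), IsEz K X →
      HasEtaleInterior K ((fun x => x ∘ Fin.castSucc) '' X) →
      ∃ y : K, (fun i : Fin (r + 1) => δ^[(i : ℕ)] y) ∈ X := by
  intro X hX hInt
  rcases Nat.eq_zero_or_pos r with rfl | hr
  · obtain ⟨U, -, ⟨u, hu⟩, hUsub⟩ := hInt
    obtain ⟨x', hx', -⟩ := hUsub hu
    refine ⟨x' 0, ?_⟩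
    have : (fun i : Fin (0 + 1) => δ^[(i : ℕ)] (x' 0)) = x' := by
      funext i
      have : i = 0 := by apply Fin.ext; omega
      subst this
      rfl
    rw [this]; exact hx'
  · obtain ⟨hdefX, k, Z, Uo, hZ, hUo, hXeq⟩ := hX
    set v : Fin (r + 1) → (Fin r ⊕ Fin r) := fun j =>
      if hj : (j : ℕ) < r then Sum.inl ⟨j, hj⟩ else Sum.inr ⟨r - 1, by omega⟩ with hvdef
    have hv : Function.Injective v := by
      intro j1 j2 hj
      apply Fin.ext
      by_cases h1 : (j1 : ℕ) < r <;> by_cases h2 : (j2 : ℕ) < r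
      · simp only [hvdef, dif_pos h1, dif_pos h2] at hj
        injection hj with hj'
        exact congrArg (Fin.val : Fin r → ℕ) hj'
      · simp only [hvdef, dif_pos h1, dif_neg h2] at hj
        exact absurd hj (by simp)
      · simp only [hvdef, dif_neg h1, dif_pos h2] at hj
        exact absurd hj (by simp)
      · omega
    set D : Set ((Fin r ⊕ Fin r) → K) :=
      {xu | ∀ (i : Fin r) (hi : (i : ℕ) + 1 < r),
        xu (Sum.inr i) = xu (Sum.inl ⟨(i : ℕ) + 1, hi⟩)} with hDdef
    set Y : Set ((Fin r ⊕ Fin r) → K) := ((fun xu => xu ∘ v) ⁻¹' X) ∩ D with hYdef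
    -- image equality
    have himg : (fun xu : (Fin r ⊕ Fin r) → K => xu ∘ Sum.inl) '' Y =
        (fun x : Fin (r + 1) → K => x ∘ Fin.castSucc) '' X := by
      ext b
      constructor
      · rintro ⟨xu, ⟨hxX, hxD⟩, rfl⟩
        refine ⟨xu ∘ v, hxX, ?_⟩
        funext j
        show xu (v (Fin.castSucc j)) = xu (Sum.inl j)
        have hj : ((Fin.castSucc j : Fin (r + 1)) : ℕ) < r := j.isLt
        have hveq : v (Fin.castSucc j) = Sum.inl j := dif_pos hj
        rw [hveq]
      · rintro ⟨x', hx', rfl⟩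
        refine ⟨Sum.elim (x' ∘ Fin.castSucc) (fun i => x' (Fin.succ i)), ⟨?_, ?_⟩, ?_⟩
        · show Sum.elim (x' ∘ Fin.castSucc) (fun i => x' (Fin.succ i)) ∘ v ∈ X
          have : Sum.elim (x' ∘ Fin.castSucc) (fun i => x' (Fin.succ i)) ∘ v = x' := by
            funext j
            by_cases hj : (j : ℕ) < r
            · show Sum.elim (x' ∘ Fin.castSucc) _ (v j) = x' j
              simp only [hvdef, dif_pos hj]
              show x' (Fin.castSucc ⟨j, hj⟩) = x' j
              exact congrArg x' (by apply Fin.ext; rfl)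
            · show Sum.elim (x' ∘ Fin.castSucc) _ (v j) = x' j
              simp only [hvdef, dif_neg hj]
              show x' (Fin.succ ⟨r - 1, _⟩) = x' j
              exact congrArg x' (by apply Fin.ext; simp only [Fin.val_succ]; omega)
          rw [this]; exact hx'
        · intro i hi
          show x' (Fin.succ i) = x' (Fin.castSucc ⟨(i : ℕ) + 1, hi⟩)
          exact congrArg x' (by apply Fin.ext; simp)
        · funext i; rfl
    -- IsEz Y
    have hIsEz : IsEz K Y := by
      constructor
      · -- definability
        letI := FirstOrder.Ring.compatibleRingOfRing K
        have hdefX' : (Set.univ : Set K).Definable Language.ring X := hdefX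
        show (Set.univ : Set K).Definable Language.ring Y
        refine Set.Definable.inter (hdefX'.preimage_comp v) ?_
        have hE : ∀ i : Fin r, (Set.univ : Set K).Definable Language.ring
            (if hi : (i : ℕ) + 1 < r then
              {xu : (Fin r ⊕ Fin r) → K |
                xu (Sum.inr i) = xu (Sum.inl ⟨(i : ℕ) + 1, hi⟩)} else Set.univ) := by
          intro i
          by_cases hi : (i : ℕ) + 1 < r
          · rw [dif_pos hi]
            refine ⟨Term.equal (Term.var (Sum.inr i)) (Term.var (Sum.inl ⟨(i : ℕ) + 1, hi⟩)), ?_⟩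
            ext xu
            simp [Term.equal, Formula.Realize]
          · rw [dif_neg hi]
            exact Set.definable_univ
        have hDeq : D = ⋂ i ∈ (Finset.univ : Finset (Fin r)),
            (if hi : (i : ℕ) + 1 < r then
              {xu : (Fin r ⊕ Fin r) → K |
                xu (Sum.inr i) = xu (Sum.inl ⟨(i : ℕ) + 1, hi⟩)} else Set.univ) := by
          ext xu
          simp only [hDdef, Set.mem_setOf_eq, Set.mem_iInter, Finset.mem_univ, forall_const]
          constructor
          · intro hD i
            by_cases hi : (i : ℕ) + 1 < r
            · rw [dif_pos hi]; exact hD i hi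
            · rw [dif_neg hi]; trivial
          · intro hD i hi
            have := hD i
            rw [dif_pos hi] at this
            exact this
        rw [hDeq]
        exact Set.definable_biInter_finset hE Finset.univ
      · refine ⟨k, fun i => ((fun xu : (Fin r ⊕ Fin r) → K => xu ∘ v) ⁻¹' Z i) ∩ D,
          fun i => (fun xu : (Fin r ⊕ Fin r) → K => xu ∘ v) ⁻¹' Uo i, ?_, ?_, ?_⟩
        · intro i
          obtain ⟨I, hI⟩ := hZ i
          refine ⟨(rename v '' I) ∪ {q | ∃ (i : Fin r) (hi : (i : ℕ) + 1 < r),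
            q = MvPolynomial.X (Sum.inr i) - MvPolynomial.X (Sum.inl ⟨(i : ℕ) + 1, hi⟩)}, ?_⟩
          ext xu
          simp only [Set.mem_inter_iff, Set.mem_preimage, hI, Set.mem_setOf_eq, Set.mem_union,
            hDdef]
          constructor
          · rintro ⟨hz, hd⟩ p hp
            rcases hp with ⟨q, hq, rfl⟩ | ⟨i', hi', rfl⟩
            · rw [eval_rename]; exact hz q hq
            · rw [map_sub, eval_X, eval_X, sub_eq_zero]; exact hd i' hi'
          · intro hall
            constructor
            · intro q hq
              have := hall _ (Or.inl ⟨q, hq, rfl⟩)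
              rwa [eval_rename] at this
            · intro i' hi'
              have := hall _ (Or.inr ⟨i', hi', rfl⟩)
              rwa [map_sub, eval_X, eval_X, sub_eq_zero] at this
        · intro i
          exact etale_preimage_open K v hv (hUo i)
        · ext xu
          simp only [hYdef, Set.mem_inter_iff, Set.mem_preimage, hXeq, Set.mem_iUnion]
          tauto
    obtain ⟨a, haX, haD⟩ := h Y hIsEz (by rw [himg]; exact hInt)
    have haD' : ∀ (i : Fin r) (hi : (i : ℕ) + 1 < r), δ (a i) = a ⟨(i : ℕ) + 1, hi⟩ := haD
    have key : ∀ (n : ℕ) (hn : n < r), a ⟨n, hn⟩ = δ^[n] (a ⟨0, hr⟩) := by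
      intro n
      induction n with
      | zero => intro hn; rfl
      | succ n ih =>
        intro hn
        have hn' : n < r := by omega
        have hstep := haD' ⟨n, hn'⟩ hn
        rw [Function.iterate_succ_apply', ← ih hn']
        exact hstep.symm
    refine ⟨a ⟨0, hr⟩, ?_⟩
    have heq : (fun i : Fin (r + 1) => δ^[(i : ℕ)] (a ⟨0, hr⟩)) =
        (Sum.elim a fun i => δ (a i)) ∘ v := by
      funext j
      show δ^[(j : ℕ)] (a ⟨0, hr⟩) = Sum.elim a (fun i => δ (a i)) (v j)
      by_cases hj : (j : ℕ) < r
      · simp only [hvdef, dif_pos hj]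
        exact (key j hj).symm
      · simp only [hvdef, dif_neg hj]
        show δ^[(j : ℕ)] (a ⟨0, hr⟩) = δ (a ⟨r - 1, _⟩)
        have hjr : (j : ℕ) = r := by omega
        have h1 : r - 1 < r := by omega
        have hiter : δ^[(j : ℕ)] (a ⟨0, hr⟩) = δ (δ^[r - 1] (a ⟨0, hr⟩)) := by
          have hjr2 : (j : ℕ) = (r - 1) + 1 := by omega
          rw [hjr2, Function.iterate_succ_apply']
        rw [hiter, key (r - 1) h1]
    rw [heq]; exact haX
end

section
/- Let K be a sufficiently saturated algebraically bounded ℒ-structure of characteristic zero with a generic derivation δ, let ψ(x_0, …, x_r, y) be an ℒ-formula, and let (a_{i,j})_{i,j<ω} be a strongly ℒ^δ-indiscernible array; set X_{i,j} = {x̄ ∈ K^{r+1} : K ⊨ ψ(x̄, a_{i,j})}, let π: K^{r+1} → K^r be the projection onto the first r coordinates, let F_{i,n} = π(X_{i,0} ∩ X_{i,1} ∩ ⋯ ∩ X_{i,n}), and let Z_{i,n} be the Zariski closure of F_{i,n}. Then there exists m such that Z_{i,m} = Z_{i,n} for all i and all n ≥ m, and moreover π(X_{i,j_0} ∩ X_{i,j_1}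 ∩ ⋯ ∩ X_{i,j_m}) ⊆ Z_{i,m} for all i and all indices m < j_0 < j_1 < ⋯ < j_m. -/
open MvPolynomial FirstOrder FirstOrder.Language

open FirstOrder FirstOrder.Language

/-- The language with a single unary function symbol `δ` and nothing else. -/
def unaryFunLang : FirstOrder.Language.{0, 0} :=
  ⟨fun n => match n with | 1 => PUnit | _ => PEmpty, fun _ => PEmpty⟩

/-- The `unaryFunLang`-structure on `K` interpreting the unary function symbol as `δ`. -/
def deltaStructure (K : Type*) (δ : K → K) : unaryFunLang.Structure K where
  funMap {n} f x :=
    match n, f, x with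
    | 1, _, x => δ (x 0)
    | 0, f, _ => PEmpty.elim f
    | (_ + 2), f, _ => PEmpty.elim f
  RelMap {n} r := PEmpty.elim r

/-- The language `ℒ^δ = ℒ ∪ {δ}`. -/
def Ldelta (L : FirstOrder.Language) : FirstOrder.Language := L.sum unaryFunLang

/-- The `ℒ^δ`-structure on `K` given by the `ℒ`-structure together with the derivation `δ`. -/
def LdeltaStructure (L : FirstOrder.Language) (K : Type*) [L.Structure K] (δ : K → K) :
    (Ldelta L).Structure K :=
  @Language.sumStructure L unaryFunLang K _ (deltaStructure K δ)

/-- Realization of an `ℒ^δ`-formula in the structure `(K, δ)`. -/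
def RealizeD (L : FirstOrder.Language) (K : Type*) [L.Structure K] (δ : K → K) {α : Type*}
    (φ : (Ldelta L).Formula α) (v : α → K) : Prop :=
  @FirstOrder.Language.Formula.Realize (Ldelta L) K (LdeltaStructure L K δ) α φ v

/-- The complete `ℒ^δ`-theory of the differential structure `(K, δ)`. -/
def completeTheoryD (L : FirstOrder.Language) (K : Type*) [L.Structure K] (δ : K → K) :
    (Ldelta L).Theory :=
  @Language.completeTheory (Ldelta L) K (LdeltaStructure L K δ)

/-- Model-theoretic algebraic closure of a parameter set `A` in an `L`-structure `M`:
the union of all finite `A`-definable subsets of `M`. -/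
def mAcl (L : FirstOrder.Language) (M : Type*) [L.Structure M] (A : Set M) : Set M :=
  {a | ∃ S : Set M, A.Definable₁ L S ∧ S.Finite ∧ a ∈ S}

/-- `K` is an algebraically bounded `ℒ`-structure: for every elementary extension `K'` of
`K` (given by a ring embedding preserving all `ℒ`-formulas), every parameter set `B ⊆ K'`
and every `a ∈ K'`, `a` is model-theoretically algebraic over `K ∪ B` if and only if `a`
is algebraic over the subfield generated by `K ∪ B` (i.e. `trdeg(a | K(B)) = 0`). -/
def AlgebraicallyBounded (L : FirstOrder.Language) (K : Type*) [Field K] [L.Structure K] :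
    Prop :=
  ∀ (K' : Type*) [Field K'] [L.Structure K'] (g : K →+* K'),
    (∀ (n : ℕ) (φ : L.Formula (Fin n)) (v : Fin n → K),
      φ.Realize ((g : K → K') ∘ v) ↔ φ.Realize v) →
    ∀ (B : Set K') (a : K'),
      a ∈ mAcl L K' (Set.range g ∪ B) ↔
        IsAlgebraic (Subfield.closure (Set.range (g : K → K') ∪ B)) a

universe u v

/-- Some `L`-formula `φ(x, y)` has the tree property of the second kind (TP₂) modulo the
theory `T`: in some model `M ⊨ T` there is an array `(a_{i,j})` such that
`φ(x, a_{i,j}) ∧ φ(x, a_{i,j'})` is inconsistent for all `i` and `j < j'` (equivalently, has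
no solution in `M`), while each vertical path type `{φ(x, a_{i,f(i)}) : i < ω}` is consistent
(equivalently, finitely satisfiable in `M`). -/
def TheoryHasTP2 {L : FirstOrder.Language.{u, v}} (T : L.Theory) : Prop :=
  ∃ (n m : ℕ) (φ : L.Formula (Fin n ⊕ Fin m)) (M : Theory.ModelType.{u, v, max u v} T)
    (a : ℕ → ℕ → Fin m → M),
      (∀ (i j j' : ℕ), j < j' →
        ¬ ∃ x : Fin n → M, φ.Realize (Sum.elim x (a i j)) ∧ φ.Realize (Sum.elim x (a i j'))) ∧
      (∀ f : ℕ → ℕ, ∀ s : Finset ℕ, ∃ x : Fin n → M,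
        ∀ i ∈ s, φ.Realize (Sum.elim x (a i (f i))))

/-- A finite set of elements of `2^{<ω}` is an antichain (pairwise incomparable in the
prefix/truncation order). -/
def IsTreeAntichain (A : Finset (List Bool)) : Prop :=
  ∀ η ∈ A, ∀ ν ∈ A, η <+: ν → η = ν

/-- Some `L`-formula `φ(x, y)` has the antichain tree property (ATP) modulo the theory `T`:
in some model `M ⊨ T` there are parameters `(a_η)_{η ∈ 2^{<ω}}` such that
`φ(x, a_η) ∧ φ(x, a_ν)` is inconsistent whenever `η` is a strict truncation of `ν`, while
the type `{φ(x, a_η) : η ∈ A}` is consistent (finitely satisfiable in `M`) for every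
antichain `A ⊆ 2^{<ω}`. -/
def TheoryHasATP {L : FirstOrder.Language.{u, v}} (T : L.Theory) : Prop :=
  ∃ (n m : ℕ) (φ : L.Formula (Fin n ⊕ Fin m)) (M : Theory.ModelType.{u, v, max u v} T)
    (a : List Bool → Fin m → M),
      (∀ η ν : List Bool, η <+: ν → η ≠ ν →
        ¬ ∃ x : Fin n → M, φ.Realize (Sum.elim x (a η)) ∧ φ.Realize (Sum.elim x (a ν))) ∧
      (∀ A : Finset (List Bool), IsTreeAntichain A →
        ∃ x : Fin n → M, ∀ η ∈ A, φ.Realize (Sum.elim x (a η)))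

/-- The structure `(K, δ)` is sufficiently (countably) saturated: every countable set of
`ℒ^δ`-formulas with countably many parameters from `K` that is finitely satisfiable in `K`
is realized in `K`. -/
def CountablySaturatedD (L : FirstOrder.Language) (K : Type*) [L.Structure K] (δ : K → K) :
    Prop :=
  ∀ (n : ℕ) (φ : ℕ → (Ldelta L).Formula (Fin n ⊕ ℕ)) (p : ℕ → K),
    (∀ s : Finset ℕ, ∃ x : Fin n → K, ∀ i ∈ s, RealizeD L K δ (φ i) (Sum.elim x p)) →
    ∃ x : Fin n → K, ∀ i, RealizeD L K δ (φ i) (Sum.elim x p)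

/-- The array `(a_{i,j})_{i,j<ω}` of `m`-tuples is strongly `ℒ^δ`-indiscernible in `(K, δ)`:
each row is `ℒ^δ`-indiscernible over the other rows, and the sequence of rows is
`ℒ^δ`-indiscernible. -/
def StronglyIndiscernibleArrayD (L : FirstOrder.Language) (K : Type*) [L.Structure K]
    (δ : K → K) {m : ℕ} (a : ℕ → ℕ → Fin m → K) : Prop :=
  -- each row is indiscernible over the other rows
  (∀ (i k l : ℕ) (φ : (Ldelta L).Formula ((Fin k ⊕ Fin l) × Fin m))
      (j j' : Fin k → ℕ), StrictMono j → StrictMono j' →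
      ∀ p : Fin l → ℕ × ℕ, (∀ t, (p t).1 ≠ i) →
      (RealizeD L K δ φ (fun q =>
          Sum.elim (fun t => a i (j t)) (fun t => a (p t).1 (p t).2) q.1 q.2) ↔
        RealizeD L K δ φ (fun q =>
          Sum.elim (fun t => a i (j' t)) (fun t => a (p t).1 (p t).2) q.1 q.2))) ∧
  -- the sequence of rows is indiscernible
  (∀ (n k : ℕ) (i i' : Fin n → ℕ), StrictMono i → StrictMono i' →
      ∀ (s : Fin k → Fin n) (c : Fin k → ℕ) (φ : (Ldelta L).Formula (Fin k × Fin m)),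
      (RealizeD L K δ φ (fun q => a (i (s q.1)) (c q.1) q.2) ↔
        RealizeD L K δ φ (fun q => a (i' (s q.1)) (c q.1) q.2)))

/-- The array `(a_{i,j})` witnesses TP₂ in `(K, δ)` for the `ℒ^δ`-formula `ψ(∇^r x, y)`,
where `ψ(x_0, …, x_r, y)` is an `ℒ`-formula: the row conjunctions are inconsistent and
every vertical path type is consistent (finitely satisfiable in `K`). -/
def TP2WitnessNabla (L : FirstOrder.Language) (K : Type*) [L.Structure K] (δ : K → K)
    {r m : ℕ} (ψ : L.Formula (Fin (r + 1) ⊕ Fin m)) (a : ℕ → ℕ → Fin m → K) : Prop :=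
  (∀ (i j j' : ℕ), j < j' →
    ¬ ∃ x : K, ψ.Realize (Sum.elim (fun t : Fin (r + 1) => δ^[(t : ℕ)] x) (a i j)) ∧
        ψ.Realize (Sum.elim (fun t : Fin (r + 1) => δ^[(t : ℕ)] x) (a i j'))) ∧
  (∀ f : ℕ → ℕ, ∀ s : Finset ℕ, ∃ x : K,
    ∀ i ∈ s, ψ.Realize (Sum.elim (fun t : Fin (r + 1) => δ^[(t : ℕ)] x) (a i (f i))))

/-- Some `ℒ`-formula `θ(x_0, …, x_s, y)` is such that `θ(x, δx, …, δ^s x, y)` has TP₂ in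
`(K, δ)`. -/
def HasTP2AtLevel (L : FirstOrder.Language) (K : Type*) [L.Structure K] (δ : K → K)
    (s : ℕ) : Prop :=
  ∃ (m : ℕ) (θ : L.Formula (Fin (s + 1) ⊕ Fin m)) (b : ℕ → ℕ → Fin m → K),
    TP2WitnessNabla L K δ θ b

/-- The tree-indexed family `(a_η)` witnesses ATP in `(K, δ)` for the `ℒ^δ`-formula
`ψ(∇^r x, y)`. -/
def ATPWitnessNabla (L : FirstOrder.Language) (K : Type*) [L.Structure K] (δ : K → K)
    {r m : ℕ} (ψ : L.Formula (Fin (r + 1) ⊕ Fin m)) (a : List Bool → Fin m → K) : Prop :=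
  (∀ η ν : List Bool, η <+: ν → η ≠ ν →
    ¬ ∃ x : K, ψ.Realize (Sum.elim (fun t : Fin (r + 1) => δ^[(t : ℕ)] x) (a η)) ∧
        ψ.Realize (Sum.elim (fun t : Fin (r + 1) => δ^[(t : ℕ)] x) (a ν))) ∧
  (∀ A : Finset (List Bool), (∀ η ∈ A, ∀ ν ∈ A, η <+: ν → η = ν) →
    ∃ x : K, ∀ η ∈ A, ψ.Realize (Sum.elim (fun t : Fin (r + 1) => δ^[(t : ℕ)] x) (a η)))

/-- Some `ℒ`-formula `θ(x_0, …, x_s, y)` is such that `θ(x, δx, …, δ^s x, y)` has ATP in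
`(K, δ)`. -/
def HasATPAtLevel (L : FirstOrder.Language) (K : Type*) [L.Structure K] (δ : K → K)
    (s : ℕ) : Prop :=
  ∃ (m : ℕ) (θ : L.Formula (Fin (s + 1) ⊕ Fin m)) (b : List Bool → Fin m → K),
    ATPWitnessNabla L K δ θ b

/-- The meet (longest common initial segment) of two elements of `2^{<ω}`. -/
def treeMeet : List Bool → List Bool → List Bool
  | [], _ => []
  | _, [] => []
  | x :: xs, y :: ys => if x = y then x :: treeMeet xs ys else []

/-- Two tuples of elements of `2^{<ω}` are similar: the meet-closures realize the same
quantifier-free relations in the tree language (truncation `⊴`, meet `∧`, lexicographic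
order `<_lex` and the length preorder). -/
def TreeSimilar {k : ℕ} (η ν : Fin k → List Bool) : Prop :=
  ∀ s t u v : Fin k,
    (treeMeet (η s) (η t) <+: treeMeet (η u) (η v) ↔
      treeMeet (ν s) (ν t) <+: treeMeet (ν u) (ν v)) ∧
    (List.Lex (· < ·) (treeMeet (η s) (η t)) (treeMeet (η u) (η v)) ↔
      List.Lex (· < ·) (treeMeet (ν s) (ν t)) (treeMeet (ν u) (ν v))) ∧
    ((treeMeet (η s) (η t)).length ≤ (treeMeet (η u) (η v)).length ↔
      (treeMeet (ν s) (ν t)).length ≤ (treeMeet (ν u) (ν v)).length)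

/-- The tree-indexed family `(a_η)_{η ∈ 2^{<ω}}` of `m`-tuples is strongly
`ℒ^δ`-indiscernible in `(K, δ)`: similar tuples of indices give parameter tuples with the
same `ℒ^δ`-type. -/
def StronglyIndiscernibleTreeD (L : FirstOrder.Language) (K : Type*) [L.Structure K]
    (δ : K → K) {m : ℕ} (a : List Bool → Fin m → K) : Prop :=
  ∀ (k : ℕ) (η ν : Fin k → List Bool), TreeSimilar η ν →
    ∀ φ : (Ldelta L).Formula (Fin k × Fin m),
      (RealizeD L K δ φ (fun q => a (η q.1) q.2) ↔ RealizeD L K δ φ (fun q => a (ν q.1) q.2))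


namespace S13

open FirstOrder.Ring

/-- Sum of a list of ring terms. -/
def tSum {α : Type*} : List (Language.ring.Term α) → Language.ring.Term α
  | [] => 0
  | t :: l => t + tSum l

/-- Product of a list of ring terms. -/
def tProd {α : Type*} : List (Language.ring.Term α) → Language.ring.Term α
  | [] => 1
  | t :: l => t * tProd l

/-- Power of a ring term. -/
def tPow {α : Type*} (t : Language.ring.Term α) (n : ℕ) : Language.ring.Term α :=
  tProd (List.replicate n t)

/-- Sum of terms over a finset. -/
noncomputable def tFinsetSum {α β : Type*} (s : Finset β) (f : β → Language.ring.Term α) :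
    Language.ring.Term α :=
  tSum (s.toList.map f)

/-- Product of terms over a finset. -/
noncomputable def tFinsetProd {α β : Type*} (s : Finset β) (f : β → Language.ring.Term α) :
    Language.ring.Term α :=
  tProd (s.toList.map f)

variable {K : Type*} [Field K] [CompatibleRing K]

theorem realize_tSum {α} (v : α → K) :
    ∀ l, Term.realize v (tSum l) = (l.map (Term.realize v)).sum
  | [] => by simp [tSum, realize_zero]
  | t :: l => by simp [tSum, realize_add, realize_tSum v l]

theorem realize_tProd {α} (v : α → K) :
    ∀ l, Term.realize v (tProd l) = (l.map (Term.realize v)).prod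
  | [] => by simp [tProd, realize_one]
  | t :: l => by simp [tProd, realize_mul, realize_tProd v l]

theorem realize_tPow {α} (v : α → K) (t : Language.ring.Term α) (n : ℕ) :
    Term.realize v (tPow t n) = (Term.realize v t) ^ n := by
  simp [tPow, realize_tProd, List.map_replicate]

theorem realize_tFinsetSum {α β : Type*} (s : Finset β) (f : β → Language.ring.Term α)
    (v : α → K) : Term.realize v (tFinsetSum s f) = ∑ b ∈ s, Term.realize v (f b) := by
  rw [tFinsetSum, realize_tSum, List.map_map, Finset.sum_map_toList]; rfl

theorem realize_tFinsetProd {α β : Type*} (s : Finset β) (f : β → Language.ring.Term α)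
    (v : α → K) : Term.realize v (tFinsetProd s f) = ∏ b ∈ s, Term.realize v (f b) := by
  rw [tFinsetProd, realize_tProd, List.map_map, Finset.prod_map_toList]; rfl


section Main

set_option linter.unusedSectionVars false

/-- Evaluation of the polynomial with coefficient vector `c` (indexed by exponent vectors
bounded by `d`) at the point `x`. -/
def monEval (r d : ℕ) (c : (Fin r → Fin (d + 1)) → K) (x : Fin r → K) : K :=
  ∑ s, c s * ∏ i, x i ^ (s i : ℕ)

theorem monEval_add (r d : ℕ) (c c' : (Fin r → Fin (d + 1)) → K) (x : Fin r → K) :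
    monEval r d (c + c') x = monEval r d c x + monEval r d c' x := by
  simp [monEval, add_mul, Finset.sum_add_distrib]

theorem monEval_smul (r d : ℕ) (t : K) (c : (Fin r → Fin (d + 1)) → K) (x : Fin r → K) :
    monEval r d (t • c) x = t * monEval r d c x := by
  simp [monEval, Finset.mul_sum, mul_assoc]

variable {L : FirstOrder.Language} [L.Structure K]

/-- The space of coefficient vectors of polynomials (with exponents bounded by `d`)
vanishing on the projection of the intersection of the solution sets. -/
def VS (r k d : ℕ) (ψ : L.Formula (Fin (r + 1) ⊕ Fin k)) {ℓ : ℕ}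
    (w : Fin ℓ × Fin k → K) : Submodule K ((Fin r → Fin (d + 1)) → K) where
  carrier := {c | ∀ x : Fin (r + 1) → K,
    (∀ t : Fin ℓ, ψ.Realize (Sum.elim x fun q => w (t, q))) →
    monEval r d c (fun i => x i.castSucc) = 0}
  add_mem' := by
    intro c c' hc hc' x hx
    rw [monEval_add, hc x hx, hc' x hx, add_zero]
  zero_mem' := by
    intro x hx
    simp [monEval]
  smul_mem' := by
    intro t c hc x hx
    rw [monEval_smul, hc x hx, mul_zero]

/-- The first-order formula expressing that there exist `e` linearly independent
coefficient vectors in `VS r k d ψ w`. -/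
noncomputable def dimFormula (r k ℓ d e : ℕ)
    (ψ : L.Formula (Fin (r + 1) ⊕ Fin k)) (φR : Language.ring →ᴸ L) :
    L.Formula (Fin ℓ × Fin k) :=
  Formula.iExs (Fin e × (Fin r → Fin (d + 1)))
    ((Formula.iAlls (Fin e)
        ((φR.onFormula (BoundedFormula.iInf fun s : Fin r → Fin (d + 1) =>
            Term.equal (tFinsetSum Finset.univ fun j : Fin e =>
              Term.var (Sum.inr j) * Term.var (Sum.inl (Sum.inr (j, s)))) 0)).imp
          (φR.onFormula (BoundedFormula.iInf fun j : Fin e =>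
            Term.equal (Term.var (Sum.inr j)) 0)))) ⊓
      (Formula.iAlls
          (Fin (r + 1))
        ((BoundedFormula.iInf fun t : Fin ℓ =>
            ψ.relabel (Sum.elim (fun i => Sum.inr i) fun q => Sum.inl (Sum.inl (t, q)))).imp
          (φR.onFormula (BoundedFormula.iInf fun j : Fin e =>
            Term.equal (tFinsetSum Finset.univ fun s : Fin r → Fin (d + 1) =>
              Term.var (Sum.inl (Sum.inr (j, s))) *
                tFinsetProd Finset.univ fun i : Fin r =>
                  tPow (Term.var (Sum.inr i.castSucc)) (s i)) 0)))))

theorem realize_iInfF {α β : Type*} [Fintype β] (f : β → L.Formula α) (v : α → K) :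
    Formula.Realize (BoundedFormula.iInf f) v ↔ ∀ b ∈ (Finset.univ : Finset β), (f b).Realize v :=
  BoundedFormula.realize_iInf.trans (by simp [Formula.Realize])

variable (φR : Language.ring →ᴸ L) [φR.IsExpansionOn K]

theorem realize_dimFormula {r k ℓ d e : ℕ} (ψ : L.Formula (Fin (r + 1) ⊕ Fin k))
    (w : Fin ℓ × Fin k → K) :
    (dimFormula r k ℓ d e ψ φR).Realize w ↔
      ∃ c : Fin e → (Fin r → Fin (d + 1)) → K,
        LinearIndependent K c ∧ ∀ j, c j ∈ VS r k d ψ w := by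
  rw [dimFormula, Formula.realize_iExs]
  constructor
  · rintro ⟨cc, h⟩
    rw [Formula.realize_inf] at h
    obtain ⟨h1, h2⟩ := h
    refine ⟨fun j s => cc (j, s), ?_, ?_⟩
    · rw [Fintype.linearIndependent_iff]
      intro g hg j
      rw [Formula.realize_iAlls] at h1
      have := h1 g
      rw [show (fun a => Sum.elim (Sum.elim w cc) g a) = Sum.elim (Sum.elim w cc) g
        from rfl, Formula.realize_imp, LHom.realize_onFormula, LHom.realize_onFormula,
        realize_iInfF, realize_iInfF] at this
      have := this ?_ j (Finset.mem_univ j)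
      · rw [Formula.realize_equal] at this
        simpa [realize_zero] using this
      · intro s _
        rw [Formula.realize_equal, realize_tFinsetSum, realize_zero]
        have hgs := congrFun hg s
        simp only [Finset.sum_apply, Pi.smul_apply, smul_eq_mul, Pi.zero_apply] at hgs
        rw [← hgs]
        refine Finset.sum_congr rfl fun j _ => ?_
        rw [realize_mul, Term.realize_var, Term.realize_var]
        rfl
    · intro j x hx
      rw [Formula.realize_iAlls] at h2
      have := h2 x
      rw [show (fun a => Sum.elim (Sum.elim w cc) x a) = Sum.elim (Sum.elim w cc) x
        from rfl, Formula.realize_imp] at this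
      have h3 := this ?_
      · rw [LHom.realize_onFormula, realize_iInfF] at h3
        have := h3 j (Finset.mem_univ j)
        rw [Formula.realize_equal, realize_tFinsetSum, realize_zero] at this
        rw [monEval, ← this]
        refine Finset.sum_congr rfl fun s _ => ?_
        rw [realize_mul, Term.realize_var, realize_tFinsetProd]
        refine congrArg _ (Finset.prod_congr rfl fun i _ => ?_)
        rw [realize_tPow, Term.realize_var]
        rfl
      · rw [realize_iInfF]
        intro t _
        rw [Formula.realize_relabel]
        have heq : (Sum.elim (Sum.elim w cc) x) ∘
            (Sum.elim (fun i => Sum.inr i) fun q =>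
              Sum.inl (Sum.inl (t, q)) :
              Fin (r + 1) ⊕ Fin k → ((Fin ℓ × Fin k) ⊕ (Fin e × (Fin r → Fin (d + 1))))
                ⊕ Fin (r + 1)) = Sum.elim x fun q => w (t, q) := by
          funext b; rcases b with i | q <;> rfl
        rw [heq]
        exact hx t
  · rintro ⟨c, hli, hmem⟩
    refine ⟨fun p => c p.1 p.2, ?_⟩
    rw [Formula.realize_inf]
    set cc : Fin e × (Fin r → Fin (d + 1)) → K := fun p => c p.1 p.2 with hcc
    constructor
    · rw [Formula.realize_iAlls]
      intro g
      rw [show (fun a => Sum.elim (Sum.elim w cc) g a) = Sum.elim (Sum.elim w cc) g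
        from rfl, Formula.realize_imp, LHom.realize_onFormula, LHom.realize_onFormula,
        realize_iInfF, realize_iInfF]
      intro hprem j _
      rw [Formula.realize_equal, Term.realize_var, realize_zero]
      rw [Fintype.linearIndependent_iff] at hli
      refine hli g ?_ j
      funext s
      have := hprem s (Finset.mem_univ s)
      rw [Formula.realize_equal, realize_tFinsetSum, realize_zero] at this
      simp only [Finset.sum_apply, Pi.smul_apply, smul_eq_mul, Pi.zero_apply]
      rw [← this]
      refine Finset.sum_congr rfl fun j' _ => ?_
      rw [realize_mul, Term.realize_var, Term.realize_var]
      rfl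
    · rw [Formula.realize_iAlls]
      intro x
      rw [show (fun a => Sum.elim (Sum.elim w cc) x a) = Sum.elim (Sum.elim w cc) x
        from rfl, Formula.realize_imp, realize_iInfF, LHom.realize_onFormula, realize_iInfF]
      intro hprem j _
      rw [Formula.realize_equal, realize_tFinsetSum, realize_zero]
      have hx : ∀ t : Fin ℓ, ψ.Realize (Sum.elim x fun q => w (t, q)) := by
        intro t
        have := hprem t (Finset.mem_univ t)
        rw [Formula.realize_relabel] at this
        have heq : (Sum.elim (Sum.elim w cc) x) ∘
            (Sum.elim (fun i => Sum.inr i) fun q =>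
              Sum.inl (Sum.inl (t, q)) :
              Fin (r + 1) ⊕ Fin k → ((Fin ℓ × Fin k) ⊕ (Fin e × (Fin r → Fin (d + 1))))
                ⊕ Fin (r + 1)) = Sum.elim x fun q => w (t, q) := by
          funext b; rcases b with i | q <;> rfl
        rwa [heq] at this
      have := hmem j x hx
      rw [monEval] at this
      rw [← this]
      refine Finset.sum_congr rfl fun s _ => ?_
      rw [realize_mul, Term.realize_var, realize_tFinsetProd]
      refine congrArg _ (Finset.prod_congr rfl fun i _ => ?_)
      rw [realize_tPow, Term.realize_var]
      rfl


theorem exists_linIndep_iff_finrank {M : Type*} [AddCommGroup M] [Module K M]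
    [FiniteDimensional K M] (V : Submodule K M) (e : ℕ) :
    (∃ c : Fin e → M, LinearIndependent K c ∧ ∀ j, c j ∈ V) ↔ e ≤ Module.finrank K V := by
  constructor
  · rintro ⟨c, hli, hmem⟩
    have h2 : LinearIndependent K (V.subtype ∘ fun j => (⟨c j, hmem j⟩ : V)) := by
      convert hli using 1
      rfl
    have h3 := LinearIndependent.of_comp V.subtype h2
    simpa using h3.fintype_card_le_finrank
  · intro he
    let b := Module.finBasis K V
    refine ⟨fun j => (b (Fin.castLE he j) : M), ?_, fun j => SetLike.coe_mem _⟩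
    exact LinearIndependent.map' (b.linearIndependent.comp (Fin.castLE he)
      (Fin.castLE_injective he)) V.subtype (Submodule.ker_subtype V)

theorem VS_mono {r k d : ℕ} (ψ : L.Formula (Fin (r + 1) ⊕ Fin k)) {ℓ ℓ' : ℕ}
    (w : Fin ℓ × Fin k → K) (w' : Fin ℓ' × Fin k → K)
    (h : ∀ t : Fin ℓ, ∃ t' : Fin ℓ', ∀ q, w (t, q) = w' (t', q)) :
    VS r k d ψ w ≤ VS r k d ψ w' := by
  intro c hc x hx
  refine hc x fun t => ?_
  obtain ⟨t', ht⟩ := h t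
  have hfe : (fun q => w (t, q)) = fun q => w' (t', q) := funext ht
  rw [hfe]
  exact hx t'

/-- The exponent finsupp associated to a bounded exponent vector. -/
noncomputable def monExp {r d : ℕ} (s : Fin r → Fin (d + 1)) : Fin r →₀ ℕ :=
  Finsupp.equivFunOnFinite.symm fun i => (s i : ℕ)

theorem monExp_apply {r d : ℕ} (s : Fin r → Fin (d + 1)) (i : Fin r) :
    monExp s i = (s i : ℕ) := rfl

theorem monExp_injective {r d : ℕ} :
    Function.Injective (monExp (r := r) (d := d)) := by
  intro s s' h
  funext i
  have : (s i : ℕ) = (s' i : ℕ) := by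
    rw [← monExp_apply s i, ← monExp_apply s' i, h]
  exact Fin.val_injective this

/-- The polynomial with coefficient vector `c`. -/
noncomputable def toPoly (r d : ℕ) (c : (Fin r → Fin (d + 1)) → K) :
    MvPolynomial (Fin r) K :=
  ∑ s, MvPolynomial.monomial (monExp s) (c s)

theorem eval_toPoly {r d : ℕ} (c : (Fin r → Fin (d + 1)) → K) (x : Fin r → K) :
    MvPolynomial.eval x (toPoly r d c) = monEval r d c x := by
  rw [toPoly, map_sum, monEval]
  refine Finset.sum_congr rfl fun s _ => ?_
  rw [MvPolynomial.eval_monomial]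
  congr 1
  rw [Finsupp.prod_fintype _ _ (fun i => pow_zero (x i))]
  exact Finset.prod_congr rfl fun i _ => by rw [monExp_apply]

/-- A bound on the exponents appearing in `p`. -/
noncomputable def expBound {r : ℕ} (p : MvPolynomial (Fin r) K) : ℕ :=
  p.support.sup fun mo => Finset.univ.sup fun i => mo i

theorem le_expBound {r : ℕ} (p : MvPolynomial (Fin r) K) {mo : Fin r →₀ ℕ}
    (hm : mo ∈ p.support) (i : Fin r) : mo i ≤ expBound p := by
  unfold expBound
  exact le_trans (Finset.le_sup (Finset.mem_univ i))
    (Finset.le_sup (f := fun mo => Finset.univ.sup fun i => mo i) hm)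

/-- The coefficient vector of `p` (with exponent bound `d`). -/
noncomputable def cvec (r d : ℕ) (p : MvPolynomial (Fin r) K) :
    (Fin r → Fin (d + 1)) → K :=
  fun s => MvPolynomial.coeff (monExp s) p

theorem toPoly_cvec {r d : ℕ} (p : MvPolynomial (Fin r) K)
    (h : ∀ mo ∈ p.support, ∀ i, mo i ≤ d) : toPoly r d (cvec r d p) = p := by
  classical
  have hsub : p.support ⊆ Finset.univ.image (monExp (r := r) (d := d)) := by
    intro mo hm
    refine Finset.mem_image.2 ⟨fun i => ⟨mo i, Nat.lt_succ_of_le (h mo hm i)⟩,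
      Finset.mem_univ _, ?_⟩
    ext i
    rw [monExp_apply]
  calc toPoly r d (cvec r d p)
      = ∑ s : Fin r → Fin (d + 1),
          MvPolynomial.monomial (monExp s) (MvPolynomial.coeff (monExp s) p) := rfl
    _ = ∑ mo ∈ Finset.univ.image (monExp (r := r) (d := d)),
          MvPolynomial.monomial mo (MvPolynomial.coeff mo p) :=
        (Finset.sum_image
          (f := fun mo => (MvPolynomial.monomial mo) (MvPolynomial.coeff mo p))
          (g := monExp)
          fun x _ y _ hxy => monExp_injective hxy).symm
    _ = ∑ mo ∈ p.support, MvPolynomial.monomial mo (MvPolynomial.coeff mo p) :=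
        (Finset.sum_subset hsub fun mo _ hm => by
          rw [MvPolynomial.notMem_support_iff.1 hm, map_zero]).symm
    _ = p := MvPolynomial.support_sum_monomial_coeff p

theorem mem_vanishingIdealOf_iff {σ : Type*} (X : Set (σ → K)) (p : MvPolynomial σ K) :
    p ∈ vanishingIdealOf K X ↔ ∀ x ∈ X, MvPolynomial.eval x p = 0 := Iff.rfl

/-- The intersection of the solution sets. -/
def SolSet {r k : ℕ} (ψ : L.Formula (Fin (r + 1) ⊕ Fin k)) {ℓ : ℕ}
    (w : Fin ℓ × Fin k → K) : Set (Fin (r + 1) → K) :=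
  {x | ∀ t : Fin ℓ, ψ.Realize (Sum.elim x fun q => w (t, q))}

/-- The projection of the intersection of the solution sets. -/
def FSet {r k : ℕ} (ψ : L.Formula (Fin (r + 1) ⊕ Fin k)) {ℓ : ℕ}
    (w : Fin ℓ × Fin k → K) : Set (Fin r → K) :=
  (fun x : Fin (r + 1) → K => x ∘ Fin.castSucc) '' SolSet ψ w

theorem mem_VS {r k d : ℕ} (ψ : L.Formula (Fin (r + 1) ⊕ Fin k)) {ℓ : ℕ}
    (w : Fin ℓ × Fin k → K) (c : (Fin r → Fin (d + 1)) → K) :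
    c ∈ VS r k d ψ w ↔ ∀ x : Fin (r + 1) → K,
      (∀ t : Fin ℓ, ψ.Realize (Sum.elim x fun q => w (t, q))) →
      monEval r d c (fun i => x i.castSucc) = 0 := Iff.rfl

theorem mem_VS_iff {r k d : ℕ} (ψ : L.Formula (Fin (r + 1) ⊕ Fin k)) {ℓ : ℕ}
    (w : Fin ℓ × Fin k → K) (c : (Fin r → Fin (d + 1)) → K) :
    c ∈ VS r k d ψ w ↔ toPoly r d c ∈ vanishingIdealOf K (FSet ψ w) := by
  rw [mem_VS, mem_vanishingIdealOf_iff]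
  constructor
  · rintro hc y ⟨x, hx, rfl⟩
    rw [eval_toPoly]
    exact hc x hx
  · intro hc x hx
    have := hc (x ∘ Fin.castSucc) ⟨x, hx, rfl⟩
    rwa [eval_toPoly] at this

theorem VS_eq_of_vanishing {r k d : ℕ} (ψ : L.Formula (Fin (r + 1) ⊕ Fin k)) {ℓ1 ℓ2 : ℕ}
    (w1 : Fin ℓ1 × Fin k → K) (w2 : Fin ℓ2 × Fin k → K)
    (h : vanishingIdealOf K (FSet ψ w1) = vanishingIdealOf K (FSet ψ w2)) :
    VS r k d ψ w1 = VS r k d ψ w2 := by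
  ext c
  rw [mem_VS_iff, mem_VS_iff, h]

theorem vanishing_le_of_VS {r k : ℕ} (ψ : L.Formula (Fin (r + 1) ⊕ Fin k)) {ℓ1 ℓ2 : ℕ}
    (w1 : Fin ℓ1 × Fin k → K) (w2 : Fin ℓ2 × Fin k → K)
    (h : ∀ d, VS r k d ψ w1 = VS r k d ψ w2) :
    vanishingIdealOf K (FSet ψ w1) ≤ vanishingIdealOf K (FSet ψ w2) := by
  intro p hp
  have hb : ∀ mo ∈ p.support, ∀ i, mo i ≤ expBound p := fun mo hm i => le_expBound p hm i
  have htp : toPoly r (expBound p) (cvec r (expBound p) p) = p := toPoly_cvec p hb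
  have hc : cvec r (expBound p) p ∈ VS r k (expBound p) ψ w1 := by
    rw [mem_VS_iff, htp]; exact hp
  rw [h (expBound p), mem_VS_iff, htp] at hc
  exact hc

theorem vanishing_eq_of_VS {r k : ℕ} (ψ : L.Formula (Fin (r + 1) ⊕ Fin k)) {ℓ1 ℓ2 : ℕ}
    (w1 : Fin ℓ1 × Fin k → K) (w2 : Fin ℓ2 × Fin k → K)
    (h : ∀ d, VS r k d ψ w1 = VS r k d ψ w2) :
    vanishingIdealOf K (FSet ψ w1) = vanishingIdealOf K (FSet ψ w2) :=
  le_antisymm (vanishing_le_of_VS ψ w1 w2 h)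
    (vanishing_le_of_VS ψ w2 w1 fun d => (h d).symm)

theorem zarClosure_congr {σ : Type*} (X Y : Set (σ → K))
    (h : vanishingIdealOf K X = vanishingIdealOf K Y) :
    zarClosure K X = zarClosure K Y := by
  have hpred : ∀ p : MvPolynomial σ K,
      (∀ y ∈ X, MvPolynomial.eval y p = 0) ↔ ∀ y ∈ Y, MvPolynomial.eval y p = 0 := by
    intro p
    rw [← mem_vanishingIdealOf_iff, ← mem_vanishingIdealOf_iff, h]
  ext x
  exact ⟨fun hx p hp => hx p ((hpred p).2 hp), fun hx p hp => hx p ((hpred p).1 hp)⟩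

theorem subset_zarClosure {σ : Type*} (X : Set (σ → K)) : X ⊆ zarClosure K X :=
  fun x hx p hp => hp x hx


theorem strictMono_fin_one (f : Fin 1 → ℕ) : StrictMono f := by
  intro x y h
  rw [Subsingleton.elim x y] at h
  exact absurd h (lt_irrefl y)

theorem transfer_aux {k : ℕ} (δ : K → K) (a : ℕ → ℕ → Fin k → K)
    (hind : StronglyIndiscernibleArrayD L K δ a)
    {ℓ : ℕ} (χ : L.Formula (Fin ℓ × Fin k)) (i i' : ℕ) (u u' : Fin ℓ → ℕ)
    (hu : StrictMono u) (hu' : StrictMono u') :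
    χ.Realize (fun q : Fin ℓ × Fin k => a i (u q.1) q.2) ↔
      χ.Realize (fun q : Fin ℓ × Fin k => a i' (u' q.1) q.2) := by
  letI iU : unaryFunLang.Structure K := deltaStructure K δ
  letI iLd : (Ldelta L).Structure K := LdeltaStructure L K δ
  have hexp : (LHom.sumInl : L →ᴸ Ldelta L).IsExpansionOn K :=
    LHom.sumInl_isExpansionOn K
  let Φδ : (Ldelta L).Formula (Fin ℓ × Fin k) :=
    (LHom.sumInl : L →ᴸ Ldelta L).onFormula χ
  have bridge : ∀ v : Fin ℓ × Fin k → K, RealizeD L K δ Φδ v ↔ χ.Realize v := by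
    intro v
    exact @LHom.realize_onFormula L (Ldelta L) K _ _ _ LHom.sumInl hexp χ v
  let g : Fin ℓ × Fin k → (Fin ℓ ⊕ Fin 0) × Fin k := fun q => (Sum.inl q.1, q.2)
  have key : ∀ (f1 : Fin ℓ → Fin k → K) (f2 : Fin 0 → Fin k → K),
      (RealizeD L K δ (Φδ.relabel g)
        (fun q : (Fin ℓ ⊕ Fin 0) × Fin k => Sum.elim f1 f2 q.1 q.2) ↔
      RealizeD L K δ Φδ (fun q : Fin ℓ × Fin k => f1 q.1 q.2)) := by
    intro f1 f2
    rw [RealizeD, RealizeD, Formula.realize_relabel]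
    exact iff_of_eq (congrArg _ (funext fun q => rfl))
  have hcross : RealizeD L K δ Φδ (fun q : Fin ℓ × Fin k => a i (u q.1) q.2) ↔
      RealizeD L K δ Φδ (fun q : Fin ℓ × Fin k => a i' (u q.1) q.2) :=
    hind.2 1 ℓ (fun _ => i) (fun _ => i') (strictMono_fin_one _) (strictMono_fin_one _)
      (fun _ => 0) u Φδ
  let pp : Fin 0 → ℕ × ℕ := Fin.elim0
  have hrow := hind.1 i' ℓ 0 (Φδ.relabel g) u u' hu hu' pp (fun t => t.elim0)
  have hrow' : RealizeD L K δ Φδ (fun q : Fin ℓ × Fin k => a i' (u q.1) q.2) ↔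
      RealizeD L K δ Φδ (fun q : Fin ℓ × Fin k => a i' (u' q.1) q.2) :=
    ((key (fun t => a i' (u t)) (fun t : Fin 0 => a (pp t).1 (pp t).2)).symm.trans
      hrow).trans (key (fun t => a i' (u' t)) (fun t : Fin 0 => a (pp t).1 (pp t).2))
  exact ((bridge _).symm.trans (hcross.trans hrow')).trans (bridge _)


theorem main_core {r k : ℕ} (φR : Language.ring →ᴸ L) [φR.IsExpansionOn K]
    (ψ : L.Formula (Fin (r + 1) ⊕ Fin k)) (δ : K → K) (a : ℕ → ℕ → Fin k → K)
    (hind : StronglyIndiscernibleArrayD L K δ a) :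
    ∃ m : ℕ, ∀ (i : ℕ) {ℓ : ℕ} (u : Fin (ℓ + 1) → ℕ), StrictMono u → m ≤ ℓ →
      vanishingIdealOf K (FSet ψ fun q : Fin (ℓ + 1) × Fin k => a i (u q.1) q.2) =
      vanishingIdealOf K (FSet ψ fun q : Fin (m + 1) × Fin k => a i (q.1 : ℕ) q.2) := by
  classical
  have hpre : ∀ n : ℕ, StrictMono (fun t : Fin (n + 1) => (t : ℕ)) := fun n x y h => h
  set J : ℕ → Ideal (MvPolynomial (Fin r) K) :=
    fun n => vanishingIdealOf K
      (FSet ψ fun q : Fin (n + 1) × Fin k => a 0 (q.1 : ℕ) q.2) with hJdef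
  have hJmono : Monotone J := by
    intro n n' h p hp y hy
    refine hp y ?_
    obtain ⟨x, hx, rfl⟩ := hy
    exact ⟨x, fun t => hx ⟨(t : ℕ), by omega⟩, rfl⟩
  obtain ⟨m, hm0⟩ := monotone_stabilizes_iff_noetherian.mpr inferInstance ⟨J, hJmono⟩
  have hm : ∀ n, m ≤ n → J m = J n := fun n h => hm0 n h
  refine ⟨m, ?_⟩
  intro i ℓ u hu hℓ
  have hVS0 : ∀ d n, m ≤ n →
      VS r k d ψ (fun q : Fin (n + 1) × Fin k => a 0 (q.1 : ℕ) q.2) =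
      VS r k d ψ (fun q : Fin (m + 1) × Fin k => a 0 (q.1 : ℕ) q.2) :=
    fun d n h => VS_eq_of_vanishing ψ _ _ (hm n h).symm
  have hfr : ∀ (d i0 n : ℕ) (v : Fin (n + 1) → ℕ), StrictMono v →
      Module.finrank K
        (VS r k d ψ (fun q : Fin (n + 1) × Fin k => a i0 (v q.1) q.2)) =
      Module.finrank K
        (VS r k d ψ (fun q : Fin (n + 1) × Fin k => a 0 (q.1 : ℕ) q.2)) := by
    intro d i0 n v hv
    have hiff : ∀ e : ℕ,
        e ≤ Module.finrank K
          (VS r k d ψ (fun q : Fin (n + 1) × Fin k => a i0 (v q.1) q.2)) ↔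
        e ≤ Module.finrank K
          (VS r k d ψ (fun q : Fin (n + 1) × Fin k => a 0 (q.1 : ℕ) q.2)) := by
      intro e
      rw [← exists_linIndep_iff_finrank, ← exists_linIndep_iff_finrank,
        ← realize_dimFormula φR ψ, ← realize_dimFormula φR ψ]
      exact transfer_aux δ a hind _ i0 0 v (fun t => (t : ℕ)) hv (hpre n)
    exact le_antisymm ((hiff _).1 le_rfl) ((hiff _).2 le_rfl)
  have hN : ℓ ≤ max (u (Fin.last ℓ)) ℓ := le_max_right _ _
  set N := max (u (Fin.last ℓ)) ℓ with hNdef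
  have hub : ∀ t : Fin (ℓ + 1), u t ≤ N :=
    fun t => le_trans (hu.monotone (Fin.le_last t)) (le_max_left _ _)
  have hVSmain : ∀ d,
      VS r k d ψ (fun q : Fin (ℓ + 1) × Fin k => a i (u q.1) q.2) =
      VS r k d ψ (fun q : Fin (m + 1) × Fin k => a i (q.1 : ℕ) q.2) := by
    intro d
    have hincl1 : VS r k d ψ (fun q : Fin (ℓ + 1) × Fin k => a i (u q.1) q.2) ≤
        VS r k d ψ (fun q : Fin (N + 1) × Fin k => a i (q.1 : ℕ) q.2) := by
      refine VS_mono ψ _ _ fun t => ?_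
      have h1 := hub t
      exact ⟨⟨u t, by omega⟩, fun q => rfl⟩
    have hincl2 : VS r k d ψ (fun q : Fin (m + 1) × Fin k => a i (q.1 : ℕ) q.2) ≤
        VS r k d ψ (fun q : Fin (N + 1) × Fin k => a i (q.1 : ℕ) q.2) := by
      refine VS_mono ψ _ _ fun t => ?_
      have h1 := t.isLt
      exact ⟨⟨(t : ℕ), by omega⟩, fun q => rfl⟩
    have f1 := hfr d i ℓ u hu
    have f2 : Module.finrank K
        (VS r k d ψ (fun q : Fin (N + 1) × Fin k => a i (q.1 : ℕ) q.2)) =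
        Module.finrank K
        (VS r k d ψ (fun q : Fin (N + 1) × Fin k => a 0 (q.1 : ℕ) q.2)) :=
      hfr d i N (fun t => (t : ℕ)) (hpre N)
    have f3 : Module.finrank K
        (VS r k d ψ (fun q : Fin (m + 1) × Fin k => a i (q.1 : ℕ) q.2)) =
        Module.finrank K
        (VS r k d ψ (fun q : Fin (m + 1) × Fin k => a 0 (q.1 : ℕ) q.2)) :=
      hfr d i m (fun t => (t : ℕ)) (hpre m)
    have g1 : Module.finrank K
        (VS r k d ψ (fun q : Fin (ℓ + 1) × Fin k => a 0 (q.1 : ℕ) q.2)) =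
        Module.finrank K
        (VS r k d ψ (fun q : Fin (m + 1) × Fin k => a 0 (q.1 : ℕ) q.2)) := by
      rw [hVS0 d ℓ hℓ]
    have g2 : Module.finrank K
        (VS r k d ψ (fun q : Fin (N + 1) × Fin k => a 0 (q.1 : ℕ) q.2)) =
        Module.finrank K
        (VS r k d ψ (fun q : Fin (m + 1) × Fin k => a 0 (q.1 : ℕ) q.2)) := by
      rw [hVS0 d N (le_trans hℓ hN)]
    have e1 : VS r k d ψ (fun q : Fin (ℓ + 1) × Fin k => a i (u q.1) q.2) =
        VS r k d ψ (fun q : Fin (N + 1) × Fin k => a i (q.1 : ℕ) q.2) := by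
      refine Submodule.eq_of_le_of_finrank_le hincl1 (le_of_eq ?_)
      rw [f1, g1, f2, g2]
    have e2 : VS r k d ψ (fun q : Fin (m + 1) × Fin k => a i (q.1 : ℕ) q.2) =
        VS r k d ψ (fun q : Fin (N + 1) × Fin k => a i (q.1 : ℕ) q.2) := by
      refine Submodule.eq_of_le_of_finrank_le hincl2 (le_of_eq ?_)
      rw [f2, g2, f3]
    exact e1.trans e2.symm
  exact vanishing_eq_of_VS ψ _ _ hVSmain

end Main

end S13


/-- The Noetherianity/indiscernibility step in the proof of the NTP₂ transfer theorem:
for a strongly `ℒ^δ`-indiscernible array `(a_{i,j})` with `X_{i,j}` the solution set of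
`ψ(x̄, a_{i,j})`, `F_{i,n} = π(X_{i,0} ∩ ⋯ ∩ X_{i,n})` and `Z_{i,n}` the Zariski closure of
`F_{i,n}`, there is `m` with `Z_{i,m} = Z_{i,n}` for all `i` and all `n ≥ m`, and moreover
`π(X_{i,j_0} ∩ ⋯ ∩ X_{i,j_m}) ⊆ Z_{i,m}` for all `i` and all `m < j_0 < j_1 < ⋯ < j_m`. -/
theorem statement13 (L : FirstOrder.Language) (K : Type) [Field K] [CharZero K]
    [L.Structure K] [FirstOrder.Ring.CompatibleRing K]
    (φ : FirstOrder.Language.LHom FirstOrder.Language.ring L) [φ.IsExpansionOn K]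
    (hbd : AlgebraicallyBounded L K)
    (δ : K → K) (hδ : IsDerivationOn δ) (hgen : GenericDerivation L K δ)
    (hsat : CountablySaturatedD L K δ)
    (r k : ℕ) (ψ : L.Formula (Fin (r + 1) ⊕ Fin k))
    (a : ℕ → ℕ → Fin k → K)
    (hind : StronglyIndiscernibleArrayD L K δ a) :
    ∃ m : ℕ,
      (∀ (i n : ℕ), m ≤ n →
        zarClosure K ((fun x : Fin (r + 1) → K => x ∘ Fin.castSucc) ''
          ⋂ j ∈ Finset.range (n + 1),
            {x : Fin (r + 1) → K | ψ.Realize (Sum.elim x (a i j))}) =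
        zarClosure K ((fun x : Fin (r + 1) → K => x ∘ Fin.castSucc) ''
          ⋂ j ∈ Finset.range (m + 1),
            {x : Fin (r + 1) → K | ψ.Realize (Sum.elim x (a i j))})) ∧
      (∀ (i : ℕ) (j : Fin (m + 1) → ℕ), StrictMono j → m < j 0 →
        (fun x : Fin (r + 1) → K => x ∘ Fin.castSucc) ''
          ⋂ t : Fin (m + 1), {x : Fin (r + 1) → K | ψ.Realize (Sum.elim x (a i (j t)))} ⊆
        zarClosure K ((fun x : Fin (r + 1) → K => x ∘ Fin.castSucc) ''
          ⋂ j ∈ Finset.range (m + 1),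
            {x : Fin (r + 1) → K | ψ.Realize (Sum.elim x (a i j))})) := by
  classical
  obtain ⟨m, hmain⟩ := S13.main_core φ ψ δ a hind
  have hsetSol : ∀ (i n : ℕ),
      (⋂ j ∈ Finset.range (n + 1),
        {x : Fin (r + 1) → K | ψ.Realize (Sum.elim x (a i j))}) =
      S13.SolSet ψ (fun q : Fin (n + 1) × Fin k => a i (q.1 : ℕ) q.2) := by
    intro i n
    ext x
    simp only [Set.mem_iInter, Finset.mem_range, Set.mem_setOf_eq, S13.SolSet]
    constructor
    · intro h t
      exact h (t : ℕ) t.isLt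
    · intro h j hj
      exact h ⟨j, hj⟩
  have hset : ∀ (i n : ℕ),
      ((fun x : Fin (r + 1) → K => x ∘ Fin.castSucc) ''
        ⋂ j ∈ Finset.range (n + 1),
          {x : Fin (r + 1) → K | ψ.Realize (Sum.elim x (a i j))}) =
      S13.FSet ψ (fun q : Fin (n + 1) × Fin k => a i (q.1 : ℕ) q.2) :=
    fun i n => congrArg _ (hsetSol i n)
  have hset2 : ∀ (i : ℕ) (j : Fin (m + 1) → ℕ),
      ((fun x : Fin (r + 1) → K => x ∘ Fin.castSucc) ''
        ⋂ t : Fin (m + 1),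
          {x : Fin (r + 1) → K | ψ.Realize (Sum.elim x (a i (j t)))}) =
      S13.FSet ψ (fun q : Fin (m + 1) × Fin k => a i (j q.1) q.2) := by
    intro i j
    refine congrArg _ ?_
    ext x
    simp only [Set.mem_iInter, Set.mem_setOf_eq, S13.SolSet]
  refine ⟨m, ?_, ?_⟩
  · intro i n hn
    rw [hset i n, hset i m]
    exact S13.zarClosure_congr _ _
      (hmain i (fun t : Fin (n + 1) => (t : ℕ)) (fun x y h => h) hn)
  · intro i j hj hj0
    rw [hset2 i j, hset i m]
    rw [← S13.zarClosure_congr _ _ (hmain i j hj le_rfl)]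
    exact S13.subset_zarClosure _
end
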